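/- arXiv:1702.08547 — 2 statements merged into one kernel-verified Lean document; each statement's English description precedes it below -/
import Mathlib

section
/- For every k ≥ 1, the k-th prime satisfies p_k < k² + 2, and for k ≥ 2, p_k < k²; in particular p_{n+1} < (n+1)² for all n ≥ 1. -/
/-!
Every binomial coefficient `n.choose m` divides `lcm(1, …, n)`, so
`2 ^ n ≤ (n + 1) · lcm(1, …, n)`; each prime-power factor of that lcm is at most `n`, so
`lcm(1, …, n) ≤ n ^ π(n)`. For `n = k² - 1`, fewer than `k` primes below `k²` would give
`2 ^ (k² - 1) ≤ k ^ (2k)`, which fails once `k ≥ 7`; the cases `k ≤ 6` are checked directly.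
-/

open Finset Real

/-- `p k` denotes the `k`-th prime number, so `p 1 = 2`. -/
noncomputable def p (k : ℕ) : ℕ := Nat.nth Nat.Prime (k - 1)

namespace Nat

theorem lcmUpto_le_pow_primeCounting (n : ℕ) : lcmUpto n ≤ n ^ primeCounting n := by
  rcases eq_or_ne n 0 with rfl | hn
  · decide
  rw [lcmUpto_eq_prod_pow_log, ← primesLE_card_eq_primeCounting, ← prod_const]
  exact prod_le_prod' fun q _ => pow_log_le_self q hn

theorem two_pow_le_mul_pow_primeCounting (n : ℕ) : 2 ^ n ≤ (n + 1) * n ^ primeCounting n :=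
  (Chebyshev.two_pow_le_mul_lcmUpto n).trans <|
    Nat.mul_le_mul_left _ (lcmUpto_le_pow_primeCounting n)

theorem two_mul_sq_le_two_pow {k : ℕ} (hk : 7 ≤ k) : 2 * k ^ 2 ≤ 2 ^ k := by
  induction k, hk using Nat.le_induction with
  | base => norm_num
  | succ k _ ih =>
    calc 2 * (k + 1) ^ 2 ≤ 2 * (2 * k ^ 2) := by nlinarith
      _ ≤ 2 * 2 ^ k := Nat.mul_le_mul_left 2 ih
      _ = 2 ^ (k + 1) := Nat.pow_succ'.symm

theorem le_primeCounting'_sq {k : ℕ} (hk : 2 ≤ k) : k ≤ primeCounting' (k ^ 2) := by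
  rcases lt_or_ge k 7 with hsmall | hlarge
  · interval_cases k <;> decide
  by_contra! hfew
  obtain ⟨m, rfl⟩ : ∃ m, k = m + 1 := ⟨k - 1, by omega⟩
  obtain ⟨n, hn⟩ : ∃ n, n + 1 = (m + 1) ^ 2 := ⟨m ^ 2 + 2 * m, by ring⟩
  have hπ : primeCounting n ≤ m := by
    rw [← hn, ← primeCounting_eq_primeCounting'_succ] at hfew
    omega
  have hsq : (m + 1) ^ 2 ≤ 2 ^ m := by
    have h2 : 2 ^ (m + 1) = 2 * 2 ^ m := Nat.pow_succ'
    have := two_mul_sq_le_two_pow hlarge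
    omega
  have hexp : m * (m + 1) < n := by nlinarith
  have : 2 ^ n < 2 ^ n := calc
    2 ^ n ≤ (n + 1) * n ^ primeCounting n := two_pow_le_mul_pow_primeCounting n
    _ ≤ (m + 1) ^ 2 * ((m + 1) ^ 2) ^ m := by
      rw [hn]
      gcongr <;> omega
    _ = ((m + 1) ^ 2) ^ (m + 1) := Nat.pow_succ'.symm
    _ ≤ (2 ^ m) ^ (m + 1) := Nat.pow_le_pow_left hsq _
    _ = 2 ^ (m * (m + 1)) := (pow_mul _ _ _).symm
    _ < 2 ^ n := Nat.pow_lt_pow_right (by norm_num) hexp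
  exact lt_irrefl _ this

end Nat

theorem p_lt_sq {k : ℕ} (hk : 2 ≤ k) : p k < k ^ 2 :=
  Nat.nth_lt_of_lt_count ((Nat.sub_lt (by omega) one_pos).trans_le (Nat.le_primeCounting'_sq hk))

theorem prime_lt_sq :
    (∀ k : ℕ, 1 ≤ k → p k < k ^ 2 + 2) ∧
    (∀ k : ℕ, 2 ≤ k → p k < k ^ 2) ∧
    (∀ n : ℕ, 1 ≤ n → p (n + 1) < (n + 1) ^ 2) := by
  refine ⟨fun k hk => ?_, fun k hk => p_lt_sq hk, fun n hn => p_lt_sq (by omega)⟩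
  rcases hk.eq_or_lt with rfl | hk
  · simp [p, Nat.nth_prime_zero_eq_two]
  · exact (p_lt_sq hk).trans (by omega)
end

section
/- For every n ≥ 1, the average value (√p_{n+1} - √2)/n of the Andrica differences lies strictly in the open interval (0, 1). -/
/-!
Every prime power dividing `lcm(1, …, N)` is at most `N`, so `2 ^ N ≤ (N + 1) * N ^ π(N)`.
For `N = n² + 2n` this is incompatible with `π(N) ≤ n` once `2(n + 1)² < 2 ^ (n + 1)`, hence
`p (n + 1) < (n + 1)²` and `√p (n + 1) < n + 1 < n + √2`. The lower bound is just `p (n + 1) > 2`.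
-/

open Finset Real

namespace Nat

theorem two_mul_sq_lt_two_pow {k : ℕ} (hk : 7 ≤ k) : 2 * k ^ 2 < 2 ^ k := by
  induction k, hk using Nat.le_induction with
  | base => norm_num
  | succ k hk ih =>
    calc 2 * (k + 1) ^ 2 ≤ 2 * (2 * k ^ 2) := by nlinarith
      _ < 2 * 2 ^ k := by omega
      _ = 2 ^ (k + 1) := (Nat.pow_succ' ..).symm

theorem lt_primeCounting_sq_add_two_mul {n : ℕ} (hn : n ≠ 0) :
    n < primeCounting (n ^ 2 + 2 * n) := by
  obtain hsmall | hlarge := lt_or_ge n 6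
  · interval_cases n <;> first | omega | decide
  by_contra! hcount
  have hN : n ^ 2 + 2 * n + 1 = (n + 1) ^ 2 := by ring
  have hupper : 2 ^ (n ^ 2 + 2 * n) ≤ ((n + 1) ^ 2) ^ (n + 1) :=
    calc 2 ^ (n ^ 2 + 2 * n)
        ≤ (n ^ 2 + 2 * n + 1) * (n ^ 2 + 2 * n) ^ primeCounting (n ^ 2 + 2 * n) :=
          two_pow_le_mul_pow_primeCounting _
      _ ≤ (n ^ 2 + 2 * n + 1) * (n ^ 2 + 2 * n + 1) ^ n :=
          Nat.mul_le_mul_left _ (Nat.pow_le_pow_of_le (by omega) (by omega) |>.trans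
            (Nat.pow_le_pow_left (by omega) _))
      _ = ((n + 1) ^ 2) ^ (n + 1) := by rw [hN]; ring
  have hlower : (2 * (n + 1) ^ 2) ^ (n + 1) < (2 ^ (n + 1)) ^ (n + 1) :=
    Nat.pow_lt_pow_left (two_mul_sq_lt_two_pow (by omega)) (by omega)
  have hsquare : 2 ^ (n ^ 2 + 2 * n) * 2 = (2 ^ (n + 1)) ^ (n + 1) := by
    rw [← _root_.pow_succ, ← _root_.pow_mul]; congr 1; ring
  have hfactor : 2 * ((n + 1) ^ 2) ^ (n + 1) ≤ (2 * (n + 1) ^ 2) ^ (n + 1) := by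
    rw [Nat.mul_pow]; exact Nat.mul_le_mul_right _ (Nat.le_self_pow (by omega) 2)
  omega

theorem nth_prime_lt_add_one_sq {n : ℕ} (hn : n ≠ 0) : nth Nat.Prime n < (n + 1) ^ 2 := by
  rw [← lt_nth_iff_count_lt infinite_setOfPred_prime, ← primeCounting']
  have := lt_primeCounting_sq_add_two_mul hn
  rwa [primeCounting, show n ^ 2 + 2 * n + 1 = (n + 1) ^ 2 by ring] at this

end Nat

theorem andrica_average_mem_Ioo (n : ℕ) (hn : 1 ≤ n) :
    (Real.sqrt (p (n + 1)) - Real.sqrt 2) / n ∈ Set.Ioo (0 : ℝ) 1 := by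
  have hp : p (n + 1) = Nat.nth Nat.Prime n := by simp [p]
  have hn_pos : (0 : ℝ) < n := by exact_mod_cast hn
  have htwo_lt : (2 : ℝ) < p (n + 1) := by
    have := Nat.add_two_le_nth_prime n
    rw [hp]; exact_mod_cast (by omega : 2 < Nat.nth Nat.Prime n)
  have hsqrt_lt : √(p (n + 1) : ℝ) < n + 1 := by
    rw [Real.sqrt_lt' (by positivity), hp]
    exact_mod_cast Nat.nth_prime_lt_add_one_sq (by omega)
  refine ⟨div_pos ?_ hn_pos, (div_lt_one hn_pos).mpr ?_⟩
  · linarith [Real.sqrt_lt_sqrt zero_le_two htwo_lt]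
  · linarith [Real.one_lt_sqrt_two]
end
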